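/- Fix d ≥ 1 and define L₀ : ℝ^d → ℝ̄ by L₀(x) = sup_{y ∈ ℝ^d} ( ⟨x,y⟩ − max_{l ∈ {0,1,…,d}} ( ‖y‖_(l) − l ) ). Then the ℓ0 pseudonorm is the composition of L₀ with the Euclidean normalization mapping: ℓ0(x) = L₀( x / ‖x‖ ) for every x ∈ ℝ^d with x ≠ 0. -/

import Mathlib

noncomputable section

variable {d : ℕ}

/-- The projection `x_K` of `x` onto the coordinates in `K`
(the components outside `K` vanish). -/
def restr (K : Finset (Fin d)) (x : EuclideanSpace ℝ (Fin d)) : EuclideanSpace ℝ (Fin d) :=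
  WithLp.toLp 2 (fun i => if i ∈ K then x i else 0)

/-- The 2-k-symmetric gauge norm `‖y‖_(k) = sup {‖y_K‖ : |K| ≤ k}`
(equal to `0` for `k = 0`, by the convention `‖·‖_(0) = 0`). -/
def gaugeNorm (k : ℕ) (y : EuclideanSpace ℝ (Fin d)) : ℝ :=
  ⨆ K : {K : Finset (Fin d) // K.card ≤ k}, ‖restr (K : Finset (Fin d)) y‖

/-- The ℓ₀ pseudonorm: the number of nonzero components. -/
def l0 (x : EuclideanSpace ℝ (Fin d)) : ℕ :=
  (Finset.univ.filter fun i => x i ≠ 0).card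

open Classical in
/-- The Capra coupling `¢(x,y) = ⟨x,y⟩ / ‖x‖` for `x ≠ 0`, and `¢(0,y) = 0`. -/
def capra (x y : EuclideanSpace ℝ (Fin d)) : ℝ :=
  if x = 0 then 0 else (inner ℝ x y : ℝ) / ‖x‖

/-- The Capra conjugate of ℓ₀: `y ↦ max_{0 ≤ l ≤ d} (‖y‖_(l) − l)`. -/
def capraConjL0 (y : EuclideanSpace ℝ (Fin d)) : ℝ :=
  ⨆ l : Fin (d + 1), (gaugeNorm (l : ℕ) y - ((l : ℕ) : ℝ))

/-- `L₀(x) = sup_y (⟨x,y⟩ − max_{0 ≤ l ≤ d}(‖y‖_(l) − l))`, with values in `ℝ̄ = EReal`. -/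
def L0 (x : EuclideanSpace ℝ (Fin d)) : EReal :=
  ⨆ y : EuclideanSpace ℝ (Fin d), (((inner ℝ x y : ℝ) - capraConjL0 y : ℝ) : EReal)

/-- The k-support norm: the dual norm of the 2-k-symmetric gauge norm,
`‖y‖^sp_(k) = sup {⟨x,y⟩ : ‖x‖_(k) ≤ 1}`. -/
def suppNorm (k : ℕ) (y : EuclideanSpace ℝ (Fin d)) : ℝ :=
  sSup {c : ℝ | ∃ x : EuclideanSpace ℝ (Fin d), gaugeNorm k x ≤ 1 ∧ c = (inner ℝ x y : ℝ)}

/-- The unit ball of the k-support norm, with the convention `B^sp_(0) = {0}`. -/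
def Bsp (d k : ℕ) : Set (EuclideanSpace ℝ (Fin d)) :=
  if k = 0 then {0} else {y | suppNorm k y ≤ 1}

/-- The degenerate unit sphere `S_K = {x : x_{−K} = 0 and ‖x_K‖ = 1}`. -/
def sphK (K : Finset (Fin d)) : Set (EuclideanSpace ℝ (Fin d)) :=
  {x | (∀ i, i ∉ K → x i = 0) ∧ ‖restr K x‖ = 1}

/-- The degenerate unit ball `B_K = {x : x_{−K} = 0 and ‖x_K‖ ≤ 1}`. -/
def ballK (K : Finset (Fin d)) : Set (EuclideanSpace ℝ (Fin d)) :=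
  {x | (∀ i, i ∉ K → x i = 0) ∧ ‖restr K x‖ ≤ 1}

/-! For a unit vector `u` with `k` nonzero coordinates, `⟨u, y⟩ ≤ ‖y‖_(k)` bounds `L₀(u)` by `k`.
Conversely `c := ‖u‖_(k-1) < 1`, because every set of `k - 1` coordinates misses part of the
mass of `u`; along the ray `y = t u` with `t = k / (1 - c)` the expression
`⟨u, y⟩ − max_l (‖y‖_(l) − l)` equals `k`. -/

def coordSupport (x : EuclideanSpace ℝ (Fin d)) : Finset (Fin d) :=
  Finset.univ.filter fun i => x i ≠ 0

lemma mem_coordSupport {x : EuclideanSpace ℝ (Fin d)} {i : Fin d} :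
    i ∈ coordSupport x ↔ x i ≠ 0 := by
  simp [coordSupport]

lemma l0_eq_card_coordSupport (x : EuclideanSpace ℝ (Fin d)) : l0 x = (coordSupport x).card :=
  rfl

lemma l0_le (x : EuclideanSpace ℝ (Fin d)) : l0 x ≤ d :=
  (coordSupport x).card_le_univ.trans_eq (Fintype.card_fin d)

lemma l0_pos {x : EuclideanSpace ℝ (Fin d)} (hx : x ≠ 0) : 0 < l0 x := by
  obtain ⟨i, hi⟩ : ∃ i, x i ≠ 0 := by
    by_contra! h
    exact hx (PiLp.ext h)
  exact Finset.card_pos.mpr ⟨i, mem_coordSupport.mpr hi⟩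

lemma l0_smul {c : ℝ} (hc : c ≠ 0) (x : EuclideanSpace ℝ (Fin d)) : l0 (c • x) = l0 x := by
  simp [l0, hc]

lemma restr_apply (K : Finset (Fin d)) (x : EuclideanSpace ℝ (Fin d)) (i : Fin d) :
    restr K x i = if i ∈ K then x i else 0 := rfl

lemma restr_smul (K : Finset (Fin d)) (t : ℝ) (y : EuclideanSpace ℝ (Fin d)) :
    restr K (t • y) = t • restr K y := by
  ext i
  simp only [restr_apply, PiLp.smul_apply, smul_eq_mul]
  split_ifs <;> simp

lemma restr_coordSupport (x : EuclideanSpace ℝ (Fin d)) : restr (coordSupport x) x = x := by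
  ext i
  rw [restr_apply]
  split_ifs with hi
  · rfl
  · exact (not_not.mp (mt mem_coordSupport.mpr hi)).symm

lemma inner_restr_left (K : Finset (Fin d)) (x y : EuclideanSpace ℝ (Fin d)) :
    inner ℝ (restr K x) y = inner ℝ x (restr K y) := by
  simp only [PiLp.inner_apply, RCLike.inner_apply, conj_trivial, restr_apply]
  refine Finset.sum_congr rfl fun i _ => ?_
  split_ifs <;> simp

lemma norm_restr_apply_le (K : Finset (Fin d)) (x : EuclideanSpace ℝ (Fin d)) (i : Fin d) :
    ‖restr K x i‖ ≤ ‖x i‖ := by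
  rw [restr_apply]
  split_ifs <;> simp

lemma norm_restr_le (K : Finset (Fin d)) (x : EuclideanSpace ℝ (Fin d)) :
    ‖restr K x‖ ≤ ‖x‖ := by
  simp only [EuclideanSpace.norm_eq]
  gcongr with i
  exact norm_restr_apply_le K x i

lemma norm_restr_lt {K : Finset (Fin d)} {x : EuclideanSpace ℝ (Fin d)}
    (hK : ¬ coordSupport x ⊆ K) : ‖restr K x‖ < ‖x‖ := by
  obtain ⟨i, hix, hiK⟩ := Finset.not_subset.mp hK
  simp only [EuclideanSpace.norm_eq]
  refine Real.sqrt_lt_sqrt (by positivity) (Finset.sum_lt_sum (fun j _ => ?_) ⟨i, by simp, ?_⟩)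
  · gcongr
    exact norm_restr_apply_le K x j
  · simpa [restr_apply, hiK] using pow_pos (norm_pos_iff.mpr (mem_coordSupport.mp hix)) 2

instance (k : ℕ) : Nonempty {K : Finset (Fin d) // K.card ≤ k} := ⟨⟨∅, by simp⟩⟩

lemma norm_restr_le_gaugeNorm {k : ℕ} {K : Finset (Fin d)} (hK : K.card ≤ k)
    (y : EuclideanSpace ℝ (Fin d)) : ‖restr K y‖ ≤ gaugeNorm k y :=
  le_ciSup (f := fun K : {K : Finset (Fin d) // K.card ≤ k} => ‖restr (K : Finset (Fin d)) y‖)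
    (Set.finite_range _).bddAbove ⟨K, hK⟩

lemma gaugeNorm_le_norm (k : ℕ) (y : EuclideanSpace ℝ (Fin d)) : gaugeNorm k y ≤ ‖y‖ :=
  ciSup_le fun K => norm_restr_le K.1 y

lemma gaugeNorm_mono {k₁ k₂ : ℕ} (h : k₁ ≤ k₂) (y : EuclideanSpace ℝ (Fin d)) :
    gaugeNorm k₁ y ≤ gaugeNorm k₂ y :=
  ciSup_le fun K => norm_restr_le_gaugeNorm (K.2.trans h) y

lemma gaugeNorm_smul {t : ℝ} (ht : 0 ≤ t) (k : ℕ) (y : EuclideanSpace ℝ (Fin d)) :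
    gaugeNorm k (t • y) = t * gaugeNorm k y := by
  simp_rw [gaugeNorm, restr_smul, norm_smul, Real.norm_of_nonneg ht]
  exact (Real.mul_iSup_of_nonneg ht _).symm

lemma gaugeNorm_lt_norm {k : ℕ} {x : EuclideanSpace ℝ (Fin d)} (hk : k < l0 x) :
    gaugeNorm k x < ‖x‖ := by
  obtain ⟨K, hK⟩ := Finite.exists_max
    fun K : {K : Finset (Fin d) // K.card ≤ k} => ‖restr (K : Finset (Fin d)) x‖
  have hsupp : ¬ coordSupport x ⊆ K := fun h => by
    have := Finset.card_le_card h
    have := K.2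
    rw [l0_eq_card_coordSupport] at hk
    omega
  exact (ciSup_le hK).trans_lt (norm_restr_lt hsupp)

lemma inner_le_norm_mul_gaugeNorm_l0 (x y : EuclideanSpace ℝ (Fin d)) :
    inner ℝ x y ≤ ‖x‖ * gaugeNorm (l0 x) y :=
  calc inner ℝ x y = inner ℝ x (restr (coordSupport x) y) := by
        rw [← inner_restr_left, restr_coordSupport]
    _ ≤ ‖x‖ * ‖restr (coordSupport x) y‖ := real_inner_le_norm _ _
    _ ≤ ‖x‖ * gaugeNorm (l0 x) y := by
        gcongr
        exact norm_restr_le_gaugeNorm le_rfl y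

lemma sub_le_capraConjL0 {l : ℕ} (hl : l ≤ d) (y : EuclideanSpace ℝ (Fin d)) :
    gaugeNorm l y - l ≤ capraConjL0 y :=
  le_ciSup (f := fun l : Fin (d + 1) => gaugeNorm (l : ℕ) y - ((l : ℕ) : ℝ))
    (Set.finite_range _).bddAbove ⟨l, by omega⟩

lemma capraConjL0_smul_le {u : EuclideanSpace ℝ (Fin d)} (hu : ‖u‖ = 1) {k : ℕ} {t : ℝ}
    (ht : 0 ≤ t) (htk : t * gaugeNorm (k - 1) u ≤ t - k) : capraConjL0 (t • u) ≤ t - k := by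
  refine ciSup_le fun l => ?_
  rw [gaugeNorm_smul ht]
  rcases le_or_gt k l with hkl | hlk
  · have : t * gaugeNorm l u ≤ t := by
      simpa [hu] using mul_le_mul_of_nonneg_left (gaugeNorm_le_norm l u) ht
    have : (k : ℝ) ≤ l := by exact_mod_cast hkl
    linarith
  · have : t * gaugeNorm l u ≤ t * gaugeNorm (k - 1) u :=
      mul_le_mul_of_nonneg_left (gaugeNorm_mono (by omega) u) ht
    have : (0 : ℝ) ≤ l := l.val.cast_nonneg
    linarith

theorem L0_eq_l0_of_norm_eq_one {u : EuclideanSpace ℝ (Fin d)} (hu : ‖u‖ = 1) :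
    L0 u = l0 u := by
  set k := l0 u
  have upper (y : EuclideanSpace ℝ (Fin d)) : inner ℝ u y - capraConjL0 y ≤ k := by
    have := sub_le_capraConjL0 (l0_le u) y
    have := inner_le_norm_mul_gaugeNorm_l0 u y
    rw [hu, one_mul] at this
    linarith
  set c := gaugeNorm (k - 1) u
  have hk : 0 < k := l0_pos (by rintro rfl; simp at hu)
  have hc : c < 1 := hu ▸ gaugeNorm_lt_norm (Nat.sub_lt hk one_pos)
  set t : ℝ := k / (1 - c)
  have ht : 0 ≤ t := div_nonneg k.cast_nonneg (by linarith)
  have htc : t * c = t - k := by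
    have : t * (1 - c) = k := div_mul_cancel₀ _ (by linarith)
    linarith
  have attained : (k : ℝ) ≤ inner ℝ u (t • u) - capraConjL0 (t • u) := by
    have := capraConjL0_smul_le hu ht htc.le
    rw [real_inner_smul_right, real_inner_self_eq_norm_sq, hu]
    linarith
  refine le_antisymm (iSup_le fun y => ?_) (le_iSup_of_le (t • u) ?_)
  · exact_mod_cast upper y
  · exact_mod_cast attained

theorem l0_eq_L0_comp_normalization_general (d : ℕ)
    (x : EuclideanSpace ℝ (Fin d)) (hx : x ≠ 0) :
    (l0 x : EReal) = L0 (‖x‖⁻¹ • x) := by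
  have hnorm : ‖‖x‖⁻¹ • x‖ = 1 := by
    rw [norm_smul, norm_inv, norm_norm, inv_mul_cancel₀ (norm_ne_zero_iff.mpr hx)]
  rw [L0_eq_l0_of_norm_eq_one hnorm, l0_smul (by simpa using hx)]

/-- the ℓ₀ pseudonorm is the composition of `L₀` with the Euclidean
normalization mapping: `ℓ₀(x) = L₀(x/‖x‖)` for every `x ≠ 0`. -/
theorem l0_eq_L0_comp_normalization (d : ℕ) (hd : 1 ≤ d)
    (x : EuclideanSpace ℝ (Fin d)) (hx : x ≠ 0) :
    (l0 x : EReal) = L0 (‖x‖⁻¹ • x) :=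
  l0_eq_L0_comp_normalization_general d x hx
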